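/- Let q, v be complex numbers with 0 < |q| < 1 and v \ne 0, let N be a positive integer, and let x_1, \ldots, x_N be complex numbers such that |q v x_i| < 1 and |q v^{-1} x_i| < 1 for every i. Then \exp\Big( \sum_{d=1}^{\infty} \frac{1}{d}\,(v^{-d} - v^{d})\, \frac{q^{d}}{(1-q^{d})^{2}} \sum_{i=1}^{N} x_i^{d} \Big) \; = \; \prod_{m=1}^{\infty} \prod_{i=1}^{N} \Big( \frac{1 - q^{m} v\, x_i}{1 - q^{m} v^{-1} x_i} \Big)^{m}, where the series on the left converges absolutely and the infinite product on the right converges. -/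

import Mathlib

/-!
Expanding every logarithm in `∑ₘ (m + 1) (log (1 - qᵐ⁺¹ v xᵢ) - log (1 - qᵐ⁺¹ v⁻¹ xᵢ))`, the
logarithm of the product, as a power series in `qᵐ⁺¹ v^{±1} xᵢ` gives a double series over `(d, m)`
which converges absolutely because `|q| < 1` and `|q v^{±1} xᵢ| < 1`. Summing it over `m` first
instead, with `∑ₘ (m + 1) rᵐ⁺¹ = r / (1 - r)²` for `r = q^{d+1}`, gives the series in the exponent
on the left.
-/

open Finset Complex

section Fubini

variable {β γ E : Type*} [NormedAddCommGroup E]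

theorem summable_norm_of_hasSum_fiberwise {F : β × γ → E} {f : β → E}
    (hF : Summable (‖F ·‖)) (hf : ∀ b, HasSum (fun c ↦ F (b, c)) (f b)) :
    Summable (‖f ·‖) :=
  hF.prod.of_nonneg_of_le (fun _ ↦ norm_nonneg _) fun b ↦
    (hf b).tsum_eq ▸ norm_tsum_le_tsum_norm (hF.prod_factor b)

theorem HasSum.prod_fiberwise_swap {F : β × γ → E} {g : γ → E} {a : E} (hF : HasSum F a)
    (hg : ∀ c, HasSum (fun b ↦ F (b, c)) (g c)) : HasSum g a :=
  ((Equiv.prodComm γ β).hasSum_iff.mpr hF).prod_fiberwise hg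

end Fubini

theorem hasSum_succ_mul_geometric_succ {𝕜 : Type*} [NormedField 𝕜] [CompleteSpace 𝕜] {r : 𝕜}
    (hr : ‖r‖ < 1) : HasSum (fun m : ℕ ↦ ((m : 𝕜) + 1) * r ^ (m + 1)) (r / (1 - r) ^ 2) := by
  simpa using (hasSum_nat_add_iff (f := fun m : ℕ ↦ (m : 𝕜) * r ^ m) 1).mpr
    (by simpa using hasSum_coe_mul_geometric_of_norm_lt_one hr)

theorem Complex.exp_succ_mul_log_sub_log {a b : ℂ} (ha : a ≠ 0) (hb : b ≠ 0) (n : ℕ) :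
    exp (((n : ℂ) + 1) * (log a - log b)) = (a / b) ^ (n + 1) := by
  rw [← Nat.cast_succ, exp_nat_mul, exp_sub, exp_log ha, exp_log hb]

/-- At `p = (d, m)`, the term of degree `d + 1` in the Taylor expansion of
`-(m + 1) log (1 - qᵐ⁺¹ z)` in powers of `qᵐ⁺¹ z`. -/
noncomputable def doubleLogSeries (q z : ℂ) (p : ℕ × ℕ) : ℂ :=
  ((p.2 : ℂ) + 1) / ((p.1 : ℂ) + 1) * (q ^ (p.2 + 1) * z) ^ (p.1 + 1)

section doubleLogSeries

variable {q z : ℂ}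

theorem norm_pow_succ_mul_lt_one (hq : ‖q‖ ≤ 1) (hz : ‖q * z‖ < 1) (m : ℕ) :
    ‖q ^ (m + 1) * z‖ < 1 :=
  calc ‖q ^ (m + 1) * z‖ = ‖q‖ ^ m * ‖q * z‖ := by rw [pow_succ, mul_assoc, norm_mul, norm_pow]
    _ ≤ ‖q * z‖ := mul_le_of_le_one_left (norm_nonneg _) (pow_le_one₀ (norm_nonneg _) hq)
    _ < 1 := hz

theorem norm_doubleLogSeries_le (hq : ‖q‖ ≤ 1) (d m : ℕ) :
    ‖doubleLogSeries q z (d, m)‖ ≤ ‖q * z‖ ^ (d + 1) * (((m : ℝ) + 1) * ‖q‖ ^ m) := by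
  have hcoef : ‖((m : ℂ) + 1) / ((d : ℂ) + 1)‖ ≤ (m : ℝ) + 1 := by
    rw [norm_div]
    exact_mod_cast div_le_self (by positivity) (by simp)
  have hpow : ‖(q ^ (m + 1) * z) ^ (d + 1)‖ ≤ ‖q‖ ^ m * ‖q * z‖ ^ (d + 1) := by
    rw [pow_succ q m, mul_assoc, mul_pow, norm_mul, norm_pow, norm_pow, norm_pow]
    gcongr
    exact pow_le_of_le_one (by positivity) (pow_le_one₀ (norm_nonneg _) hq) (by positivity)
  calc ‖doubleLogSeries q z (d, m)‖
      = ‖((m : ℂ) + 1) / ((d : ℂ) + 1)‖ * ‖(q ^ (m + 1) * z) ^ (d + 1)‖ := norm_mul _ _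
    _ ≤ ((m : ℝ) + 1) * (‖q‖ ^ m * ‖q * z‖ ^ (d + 1)) := by gcongr
    _ = _ := by ring

theorem summable_norm_doubleLogSeries (hq : ‖q‖ < 1) (hz : ‖q * z‖ < 1) :
    Summable (‖doubleLogSeries q z ·‖) := by
  have hgeom : Summable fun d : ℕ ↦ ‖q * z‖ ^ (d + 1) :=
    (summable_nat_add_iff 1).mpr (summable_geometric_of_lt_one (norm_nonneg _) hz)
  have harith : Summable fun m : ℕ ↦ ((m : ℝ) + 1) * ‖q‖ ^ m := by
    have hq' : ‖‖q‖‖ < 1 := by rwa [norm_norm]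
    simpa [add_mul] using (hasSum_coe_mul_geometric_of_norm_lt_one hq').summable.add
      (summable_geometric_of_lt_one (norm_nonneg _) hq)
  exact (hgeom.mul_of_nonneg harith (fun _ ↦ by positivity) fun _ ↦ by positivity).of_nonneg_of_le
    (fun _ ↦ norm_nonneg _) fun p ↦ norm_doubleLogSeries_le hq.le p.1 p.2

theorem hasSum_doubleLogSeries_row (hq : ‖q‖ < 1) (d : ℕ) :
    HasSum (fun m ↦ doubleLogSeries q z (d, m))
      (z ^ (d + 1) / ((d : ℂ) + 1) * (q ^ (d + 1) / (1 - q ^ (d + 1)) ^ 2)) := by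
  have hr : ‖q ^ (d + 1)‖ < 1 := by
    rw [norm_pow]; exact pow_lt_one₀ (norm_nonneg _) hq (Nat.succ_ne_zero d)
  refine ((hasSum_succ_mul_geometric_succ hr).mul_left _).congr_fun fun m ↦ ?_
  simp only [doubleLogSeries]
  rw [mul_pow, ← pow_mul, ← pow_mul, Nat.mul_comm]
  ring

theorem hasSum_doubleLogSeries_col (hq : ‖q‖ ≤ 1) (hz : ‖q * z‖ < 1) (m : ℕ) :
    HasSum (fun d ↦ doubleLogSeries q z (d, m)) (-(((m : ℂ) + 1) * log (1 - q ^ (m + 1) * z))) := by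
  rw [← mul_neg]
  refine ((hasSum_taylorSeries_neg_log' (norm_pow_succ_mul_lt_one hq hz m)).mul_left _).congr_fun
    fun d ↦ ?_
  simp only [doubleLogSeries]
  ring

end doubleLogSeries

section sum

variable {ι : Type*} [Fintype ι] {q : ℂ} {a b : ι → ℂ}

theorem summable_norm_sum_doubleLogSeries_sub (hq : ‖q‖ < 1) (ha : ∀ i, ‖q * a i‖ < 1)
    (hb : ∀ i, ‖q * b i‖ < 1) :
    Summable fun p ↦ ‖∑ i, (doubleLogSeries q (a i) p - doubleLogSeries q (b i) p)‖ :=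
  (summable_sum fun i _ ↦ (summable_norm_doubleLogSeries hq (ha i)).add
      (summable_norm_doubleLogSeries hq (hb i))).of_nonneg_of_le (fun _ ↦ norm_nonneg _)
    fun _ ↦ (norm_sum_le _ _).trans (sum_le_sum fun _ _ ↦ norm_sub_le _ _)

theorem hasSum_sum_doubleLogSeries_sub_row (hq : ‖q‖ < 1) (d : ℕ) :
    HasSum (fun m ↦ ∑ i, (doubleLogSeries q (a i) (d, m) - doubleLogSeries q (b i) (d, m)))
      ((∑ i, (a i ^ (d + 1) - b i ^ (d + 1))) / ((d : ℂ) + 1) *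
        (q ^ (d + 1) / (1 - q ^ (d + 1)) ^ 2)) := by
  simpa only [sum_div, sum_mul, sub_div, sub_mul] using hasSum_sum fun i (_ : i ∈ univ) ↦
    (hasSum_doubleLogSeries_row (z := a i) hq d).sub (hasSum_doubleLogSeries_row hq d)

theorem hasSum_sum_doubleLogSeries_sub_col (hq : ‖q‖ < 1) (ha : ∀ i, ‖q * a i‖ < 1)
    (hb : ∀ i, ‖q * b i‖ < 1) (m : ℕ) :
    HasSum (fun d ↦ ∑ i, (doubleLogSeries q (a i) (d, m) - doubleLogSeries q (b i) (d, m)))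
      (∑ i, ((m : ℂ) + 1) * (log (1 - q ^ (m + 1) * b i) - log (1 - q ^ (m + 1) * a i))) := by
  simpa only [mul_sub, neg_sub_neg] using hasSum_sum fun i (_ : i ∈ univ) ↦
    (hasSum_doubleLogSeries_col hq.le (ha i) m).sub (hasSum_doubleLogSeries_col hq.le (hb i) m)

theorem exp_sum_succ_mul_log_sub_log (hq : ‖q‖ ≤ 1) (ha : ∀ i, ‖q * a i‖ < 1)
    (hb : ∀ i, ‖q * b i‖ < 1) (m : ℕ) :
    cexp (∑ i, ((m : ℂ) + 1) * (log (1 - q ^ (m + 1) * b i) - log (1 - q ^ (m + 1) * a i))) =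
      ∏ i, ((1 - q ^ (m + 1) * b i) / (1 - q ^ (m + 1) * a i)) ^ (m + 1) := by
  have hne {z : ℂ} (hz : ‖q * z‖ < 1) : 1 - q ^ (m + 1) * z ≠ 0 :=
    (isUnit_one_sub_of_norm_lt_one (norm_pow_succ_mul_lt_one hq hz m)).ne_zero
  rw [exp_sum]
  exact prod_congr rfl fun i _ ↦ exp_succ_mul_log_sub_log (hne (hb i)) (hne (ha i)) m

end sum

theorem stmt_8_general (q v : ℂ) (hq1 : ‖q‖ < 1)
    (N : ℕ) (x : Fin N → ℂ)
    (hx1 : ∀ i, ‖q * v * x i‖ < 1) (hx2 : ∀ i, ‖q * v⁻¹ * x i‖ < 1) :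
    (Summable fun d : ℕ =>
      ‖1 / ((d : ℂ) + 1) * ((v⁻¹) ^ (d + 1) - v ^ (d + 1)) *
        (q ^ (d + 1) / (1 - q ^ (d + 1)) ^ 2) * ∑ i, x i ^ (d + 1)‖) ∧
    (Multipliable fun m : ℕ =>
      ∏ i, ((1 - q ^ (m + 1) * v * x i) / (1 - q ^ (m + 1) * v⁻¹ * x i)) ^ (m + 1)) ∧
    Complex.exp (∑' d : ℕ,
        1 / ((d : ℂ) + 1) * ((v⁻¹) ^ (d + 1) - v ^ (d + 1)) *
          (q ^ (d + 1) / (1 - q ^ (d + 1)) ^ 2) * ∑ i, x i ^ (d + 1))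
      = ∏' m : ℕ,
          ∏ i, ((1 - q ^ (m + 1) * v * x i) / (1 - q ^ (m + 1) * v⁻¹ * x i)) ^ (m + 1) := by
  have ha : ∀ i, ‖q * (v⁻¹ * x i)‖ < 1 := fun i ↦ mul_assoc q v⁻¹ (x i) ▸ hx2 i
  have hb : ∀ i, ‖q * (v * x i)‖ < 1 := fun i ↦ mul_assoc q v (x i) ▸ hx1 i
  set F : ℕ × ℕ → ℂ := fun p ↦
    ∑ i, (doubleLogSeries q (v⁻¹ * x i) p - doubleLogSeries q (v * x i) p)
  have hF : Summable (‖F ·‖) := summable_norm_sum_doubleLogSeries_sub hq1 ha hb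
  have hrow (d : ℕ) : HasSum (fun m ↦ F (d, m))
      (1 / ((d : ℂ) + 1) * ((v⁻¹) ^ (d + 1) - v ^ (d + 1)) *
        (q ^ (d + 1) / (1 - q ^ (d + 1)) ^ 2) * ∑ i, x i ^ (d + 1)) := by
    convert hasSum_sum_doubleLogSeries_sub_row hq1 d using 1
    simp only [mul_pow, ← sub_mul, ← mul_sum]
    ring
  have hprod : HasProd (fun m : ℕ ↦
      ∏ i, ((1 - q ^ (m + 1) * v * x i) / (1 - q ^ (m + 1) * v⁻¹ * x i)) ^ (m + 1))
      (cexp (∑' p, F p)) :=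
    (hF.of_norm.hasSum.prod_fiberwise_swap (hasSum_sum_doubleLogSeries_sub_col hq1 ha hb)).cexp
      |>.congr_fun fun m ↦ by
        simpa only [mul_assoc, Function.comp_apply] using
          (exp_sum_succ_mul_log_sub_log hq1.le ha hb m).symm
  exact ⟨summable_norm_of_hasSum_fiberwise hF hrow, hprod.multipliable, by
    rw [(hF.of_norm.hasSum.prod_fiberwise hrow).tsum_eq, hprod.tprod_eq]⟩

/-- Infinite product formula for the Chern-Simons partition function of the unknot:
for `0 < |q| < 1`, `v ≠ 0`, and `x_1, …, x_N` with `|q v x_i| < 1` and `|q v⁻¹ x_i| < 1`,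
`exp(∑_{d≥1} (1/d)(v^{-d} - v^d) q^d/(1-q^d)^2 ∑_i x_i^d)
  = ∏_{m=1}^∞ ∏_i ((1 - q^m v x_i)/(1 - q^m v⁻¹ x_i))^m`,
the series converging absolutely and the infinite product converging. -/
theorem stmt_8 (q v : ℂ) (hq0 : 0 < ‖q‖) (hq1 : ‖q‖ < 1) (hv : v ≠ 0)
    (N : ℕ) (hN : 0 < N) (x : Fin N → ℂ)
    (hx1 : ∀ i, ‖q * v * x i‖ < 1) (hx2 : ∀ i, ‖q * v⁻¹ * x i‖ < 1) :
    (Summable fun d : ℕ =>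
      ‖1 / ((d : ℂ) + 1) * ((v⁻¹) ^ (d + 1) - v ^ (d + 1)) *
        (q ^ (d + 1) / (1 - q ^ (d + 1)) ^ 2) * ∑ i, x i ^ (d + 1)‖) ∧
    (Multipliable fun m : ℕ =>
      ∏ i, ((1 - q ^ (m + 1) * v * x i) / (1 - q ^ (m + 1) * v⁻¹ * x i)) ^ (m + 1)) ∧
    Complex.exp (∑' d : ℕ,
        1 / ((d : ℂ) + 1) * ((v⁻¹) ^ (d + 1) - v ^ (d + 1)) *
          (q ^ (d + 1) / (1 - q ^ (d + 1)) ^ 2) * ∑ i, x i ^ (d + 1))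
      = ∏' m : ℕ,
          ∏ i, ((1 - q ^ (m + 1) * v * x i) / (1 - q ^ (m + 1) * v⁻¹ * x i)) ^ (m + 1) :=
  stmt_8_general q v hq1 N x hx1 hx2
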